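/- arXiv:1812.11659 — 3 statements merged into one kernel-verified Lean document; each statement's English description precedes it below -/
import Mathlib

section
/- For every odd integer m > 1, the finite sum identity sum_{n=0}^{(m+1)/2} [4n-1] (q^{-1};q^2)_n^4 / (q^2;q^2)_n^4 · q^{4n} = -((1+q)[m]^4[m+1][m+2] + q^{m+1}[m]^4) / (q [m+1]^4 (-q;q)_{(m-1)/2}^8) · (qbinom(m-1, (m-1)/2))^4 holds in ℚ(q). -/
open RatFunc

noncomputable def q : RatFunc ℚ := RatFunc.X

/-- q-shifted factorial `(a;b)_m = ∏_{j=0}^{m-1} (1 - a b^j)`. -/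
noncomputable def qpoch (a b : RatFunc ℚ) (m : ℕ) : RatFunc ℚ :=
  ∏ j ∈ Finset.range m, (1 - a * b ^ j)

/-- q-integer `[m] = (1-q^m)/(1-q)` for an arbitrary integer `m`. -/
noncomputable def qintZ (m : ℤ) : RatFunc ℚ := (1 - q ^ m) / (1 - q)

/-- q-integer `[m] = 1 + q + ⋯ + q^{m-1}`. -/
noncomputable def qint (m : ℕ) : RatFunc ℚ := ∑ i ∈ Finset.range m, q ^ i

/-- q-binomial coefficient `(q;q)_n / ((q;q)_k (q;q)_{n-k})`. -/
noncomputable def qbinom (n k : ℕ) : RatFunc ℚ :=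
  qpoch q q n / (qpoch q q k * qpoch q q (n - k))

/-!
The partial sums have a closed form: with `c(x, y) = -((1+x)(1-y)(1-xy) + y(1-x)²) / (x(1-x)²)`,
`∑_{n ≤ M} [4n-1] (q⁻¹;q²)_n⁴ / (q²;q²)_n⁴ q^{4n} = c(q, q^{2M}) ((q;q²)_M / (q²;q²)_M)⁴`.
The induction step is a rational identity in `x = q` and `y = q^{2M}`. For `m = 2k+1` one takes
`M = k+1`; the right-hand side becomes the same expression via
`qbinom (2k) k = (q;q²)_k (q²;q²)_k / (q;q)_k²` and `(q;q)_k (-q;q)_k = (q²;q²)_k`.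
-/

open Finset

theorem RatFunc.X_pow_sub_C_ne_zero {K : Type*} [Field K] {n : ℕ} (hn : 0 < n) (a : K) :
    (X : RatFunc K) ^ n - C a ≠ 0 := by
  rw [← algebraMap_X, ← algebraMap_C, ← map_pow, ← map_sub]
  exact (map_ne_zero_iff _ (algebraMap_injective K)).2 (Polynomial.X_pow_sub_C_ne_zero hn a)

lemma q_ne_zero : q ≠ 0 := X_ne_zero

lemma one_sub_q_pow_ne_zero {n : ℕ} (hn : n ≠ 0) : 1 - q ^ n ≠ 0 := by
  have h := X_pow_sub_C_ne_zero (K := ℚ) (Nat.pos_of_ne_zero hn) 1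
  rw [map_one] at h
  exact fun h0 => h (by rw [q] at h0; linear_combination -h0)

lemma one_add_q_pow_ne_zero {n : ℕ} (hn : n ≠ 0) : 1 + q ^ n ≠ 0 := by
  have h := X_pow_sub_C_ne_zero (K := ℚ) (Nat.pos_of_ne_zero hn) (-1)
  rw [map_neg, map_one, sub_neg_eq_add, add_comm] at h
  exact h

lemma one_sub_q_ne_zero : 1 - q ≠ 0 := by
  simpa using one_sub_q_pow_ne_zero one_ne_zero

lemma qint_eq_div (n : ℕ) : qint n = (1 - q ^ n) / (1 - q) := by
  rw [qint, geom_sum_eq (sub_ne_zero.1 one_sub_q_ne_zero).symm, ← neg_sub 1, ← neg_sub 1 q,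
    neg_div_neg_eq]

section qpoch

variable (a b : RatFunc ℚ) (k : ℕ)

lemma qpoch_zero : qpoch a b 0 = 1 := prod_range_zero _

lemma qpoch_succ : qpoch a b (k + 1) = qpoch a b k * (1 - a * b ^ k) := prod_range_succ _ k

lemma qpoch_succ' : qpoch a b (k + 1) = (1 - a) * qpoch (a * b) b k := by
  simp only [qpoch, prod_range_succ']
  rw [mul_comm]
  congr 1
  · simp
  · exact prod_congr rfl fun j _ => by ring

lemma qpoch_two_mul : qpoch a b (2 * k) = qpoch a (b ^ 2) k * qpoch (a * b) (b ^ 2) k := by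
  induction k with
  | zero => simp [qpoch_zero]
  | succ k ih =>
    rw [show 2 * (k + 1) = 2 * k + 1 + 1 by ring, qpoch_succ, qpoch_succ, ih, qpoch_succ,
      qpoch_succ]
    ring

lemma qpoch_sq_sq : qpoch (a ^ 2) (b ^ 2) k = qpoch a b k * qpoch (-a) b k := by
  induction k with
  | zero => simp [qpoch_zero]
  | succ k ih =>
    rw [qpoch_succ, qpoch_succ, qpoch_succ, ih]
    ring

variable {a b k}

lemma qpoch_ne_zero (h : ∀ j < k, 1 - a * b ^ j ≠ 0) : qpoch a b k ≠ 0 :=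
  prod_ne_zero_iff.2 fun j hj => h j (mem_range.1 hj)

end qpoch

lemma qpoch_q_pow_ne_zero {i : ℕ} (hi : i ≠ 0) (l k : ℕ) : qpoch (q ^ i) (q ^ l) k ≠ 0 :=
  qpoch_ne_zero fun j _ => by
    rw [← pow_mul, ← pow_add]
    exact one_sub_q_pow_ne_zero (by omega)

lemma qpoch_neg_q_ne_zero (k : ℕ) : qpoch (-q) q k ≠ 0 :=
  qpoch_ne_zero fun j _ => by
    rw [neg_mul, sub_neg_eq_add, ← pow_succ']
    exact one_add_q_pow_ne_zero j.succ_ne_zero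

/-- `(q;q²)_k / (q²;q²)_k`, the `q`-analogue of `(1/2)_k / k! = binom(2k, k) / 4^k`. -/
noncomputable def qHalfRatio (k : ℕ) : RatFunc ℚ := qpoch q (q ^ 2) k / qpoch (q ^ 2) (q ^ 2) k

lemma qHalfRatio_succ (k : ℕ) :
    qHalfRatio (k + 1) = qHalfRatio k * ((1 - q ^ (2 * k + 1)) / (1 - q ^ (2 * k + 2))) := by
  have := qpoch_q_pow_ne_zero two_ne_zero 2 k
  have := one_sub_q_pow_ne_zero (n := 2 * k + 2) (by omega)
  rw [qHalfRatio, qHalfRatio, qpoch_succ, qpoch_succ,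
    show q * (q ^ 2) ^ k = q ^ (2 * k + 1) by ring, show q ^ 2 * (q ^ 2) ^ k = q ^ (2 * k + 2) by ring]
  field_simp

lemma qbinom_two_mul_self (k : ℕ) : qbinom (2 * k) k = qHalfRatio k * qpoch (-q) q k ^ 2 := by
  have hq := qpoch_q_pow_ne_zero one_ne_zero 1 k
  have hR := qpoch_q_pow_ne_zero two_ne_zero 2 k
  rw [pow_one] at hq
  rw [qbinom, qHalfRatio, show 2 * k - k = k by omega, qpoch_two_mul,
    show q * q = q ^ 2 by ring, qpoch_sq_sq]
  field_simp

section partialSums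

variable {K : Type*} [Field K]

def partialSumCoeff (x y : K) : K :=
  -((1 + x) * (1 - y) * (1 - x * y) + y * (1 - x) ^ 2) / (x * (1 - x) ^ 2)

lemma partialSumCoeff_one {x : K} (hx : x ≠ 0) (hx1 : 1 - x ≠ 0) :
    partialSumCoeff x 1 = -1 / x := by
  rw [partialSumCoeff]
  field_simp
  ring

/-- The induction step of the closed form, with `x = q`, `y = q^{2M}`: the factor
`(1 - xy) / (1 - x²y)` is `qHalfRatio (M+1) / qHalfRatio M` and the last summand is the
`(M+1)`-st term of the series divided by `qHalfRatio M ^ 4`. -/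
lemma partialSumCoeff_mul_sq {x y : K} (hx : x ≠ 0) (hx1 : 1 - x ≠ 0) (hy : 1 - x ^ 2 * y ≠ 0) :
    partialSumCoeff x (x ^ 2 * y) * ((1 - x * y) / (1 - x ^ 2 * y)) ^ 4 =
      partialSumCoeff x y + (1 - x ^ 3 * y ^ 2) * (1 - x) ^ 3 * y ^ 2 / (1 - x ^ 2 * y) ^ 4 := by
  rw [partialSumCoeff, partialSumCoeff]
  field_simp
  ring

end partialSums

lemma qintZ_neg_one : qintZ (-1) = -1 / q := by
  rw [qintZ, zpow_neg_one]
  have := q_ne_zero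
  have := one_sub_q_ne_zero
  field_simp
  ring

lemma summand_succ (M : ℕ) :
    qintZ (4 * ((M + 1 : ℕ) : ℤ) - 1) * qpoch q⁻¹ (q ^ 2) (M + 1) ^ 4 /
        qpoch (q ^ 2) (q ^ 2) (M + 1) ^ 4 * q ^ (4 * (M + 1)) =
      (1 - q ^ 3 * (q ^ (2 * M)) ^ 2) * (1 - q) ^ 3 * (q ^ (2 * M)) ^ 2 /
        (1 - q ^ 2 * q ^ (2 * M)) ^ 4 * qHalfRatio M ^ 4 := by
  have := q_ne_zero
  have := one_sub_q_ne_zero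
  have := qpoch_q_pow_ne_zero two_ne_zero 2 M
  have := one_sub_q_pow_ne_zero (n := 2 * M + 2) (by omega)
  rw [qintZ, show 4 * ((M + 1 : ℕ) : ℤ) - 1 = ((4 * M + 3 : ℕ) : ℤ) by push_cast; ring,
    zpow_natCast, qpoch_succ', qpoch_succ, qHalfRatio,
    show q⁻¹ * q ^ 2 = q by field_simp, show q ^ 2 * (q ^ 2) ^ M = q ^ (2 * M + 2) by ring,
    show q ^ 2 * q ^ (2 * M) = q ^ (2 * M + 2) by ring]
  field_simp
  ring

lemma sum_range_succ_summand (M : ℕ) :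
    ∑ n ∈ range (M + 1),
        qintZ (4 * n - 1) * qpoch q⁻¹ (q ^ 2) n ^ 4 / qpoch (q ^ 2) (q ^ 2) n ^ 4 * q ^ (4 * n)
      = partialSumCoeff q (q ^ (2 * M)) * qHalfRatio M ^ 4 := by
  induction M with
  | zero =>
    simp [qintZ_neg_one, partialSumCoeff_one q_ne_zero one_sub_q_ne_zero, qHalfRatio, qpoch_zero]
  | succ M ih =>
    have hy : 1 - q ^ 2 * q ^ (2 * M) ≠ 0 := by
      rw [← pow_add]
      exact one_sub_q_pow_ne_zero (by omega)
    rw [sum_range_succ, ih, summand_succ, qHalfRatio_succ,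
      show q ^ (2 * (M + 1)) = q ^ 2 * q ^ (2 * M) by ring,
      show q ^ (2 * M + 1) = q * q ^ (2 * M) by ring,
      show q ^ (2 * M + 2) = q ^ 2 * q ^ (2 * M) by ring]
    linear_combination
      -qHalfRatio M ^ 4 * partialSumCoeff_mul_sq q_ne_zero one_sub_q_ne_zero hy

theorem sum_identity_half_general (m : ℕ) (hm : Odd m) :
    ∑ n ∈ Finset.range ((m + 1) / 2 + 1),
        qintZ (4 * n - 1) * qpoch q⁻¹ (q ^ 2) n ^ 4 / qpoch (q ^ 2) (q ^ 2) n ^ 4 * q ^ (4 * n)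
      = -(((1 + q) * qint m ^ 4 * qint (m + 1) * qint (m + 2) + q ^ (m + 1) * qint m ^ 4) /
          (q * qint (m + 1) ^ 4 * qpoch (-q) q ((m - 1) / 2) ^ 8)) *
          qbinom (m - 1) ((m - 1) / 2) ^ 4 := by
  obtain ⟨k, rfl⟩ := hm
  rw [show (2 * k + 1 + 1) / 2 + 1 = k + 1 + 1 by omega, sum_range_succ_summand,
    show (2 * k + 1 - 1) / 2 = k by omega, show 2 * k + 1 - 1 = 2 * k by omega,
    qbinom_two_mul_self, qHalfRatio_succ, qint_eq_div, qint_eq_div, qint_eq_div, partialSumCoeff]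
  have := q_ne_zero
  have := one_sub_q_ne_zero
  have := one_sub_q_pow_ne_zero (n := 2 * k + 1 + 1) (by omega)
  have := qpoch_neg_q_ne_zero k
  field_simp
  ring

theorem sum_identity_half (m : ℕ) (hm : Odd m) (hm1 : 1 < m) :
    ∑ n ∈ Finset.range ((m + 1) / 2 + 1),
        qintZ (4 * n - 1) * qpoch q⁻¹ (q ^ 2) n ^ 4 / qpoch (q ^ 2) (q ^ 2) n ^ 4 * q ^ (4 * n)
      = -(((1 + q) * qint m ^ 4 * qint (m + 1) * qint (m + 2) + q ^ (m + 1) * qint m ^ 4) /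
          (q * qint (m + 1) ^ 4 * qpoch (-q) q ((m - 1) / 2) ^ 8)) *
          qbinom (m - 1) ((m - 1) / 2) ^ 4 :=
  sum_identity_half_general m hm
end

section
/- Let p be an odd prime and r ≥ 1. Then sum_{k=0}^{p^r-2} (4k+3)/(4(k+1)^2 · 16^k) · binom(2k,k)^2 ≡ 1 - p^{2r} (mod p^{2r+1}) as p-adic integers. -/
open Nat Finset

private lemma telesc (p : ℕ) [Fact p.Prime] (n : ℕ) :
    ∑ k ∈ Finset.range n,
        (4 * (k : ℚ_[p]) + 3) * (Nat.centralBinom k : ℚ_[p]) ^ 2 /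
          (4 * ((k : ℚ_[p]) + 1) ^ 2 * 16 ^ k)
      = 1 - (Nat.centralBinom n : ℚ_[p]) ^ 2 / 16 ^ n := by
  induction n with
  | zero => simp [Nat.centralBinom]
  | succ n ih =>
    have key : ((n : ℚ_[p]) + 1) * (Nat.centralBinom (n + 1) : ℚ_[p])
        = 2 * (2 * (n : ℚ_[p]) + 1) * (Nat.centralBinom n : ℚ_[p]) := by
      have h2 : (((n + 1) * Nat.centralBinom (n + 1) : ℕ) : ℚ_[p])
          = ((2 * (2 * n + 1) * Nat.centralBinom n : ℕ) : ℚ_[p]) :=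
        congrArg _ (Nat.succ_mul_centralBinom_succ n)
      push_cast at h2
      exact h2
    have key2 : ((n : ℚ_[p]) + 1) ^ 2 * (Nat.centralBinom (n + 1) : ℚ_[p]) ^ 2
        = 4 * (2 * (n : ℚ_[p]) + 1) ^ 2 * (Nat.centralBinom n : ℚ_[p]) ^ 2 := by
      linear_combination (((n : ℚ_[p]) + 1) * (Nat.centralBinom (n + 1) : ℚ_[p])
        + 2 * (2 * (n : ℚ_[p]) + 1) * (Nat.centralBinom n : ℚ_[p])) * key
    have hn1 : ((n : ℚ_[p]) + 1) ≠ 0 := by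
      have : ((n + 1 : ℕ) : ℚ_[p]) ≠ 0 := Nat.cast_ne_zero.mpr (Nat.succ_ne_zero n)
      push_cast at this; exact this
    have h16 : (16 : ℚ_[p]) ≠ 0 := by norm_num
    have h16n : (16 : ℚ_[p]) ^ n ≠ 0 := pow_ne_zero _ h16
    have h16n1 : (16 : ℚ_[p]) ^ (n + 1) ≠ 0 := pow_ne_zero _ h16
    have hD : (4 * ((n : ℚ_[p]) + 1) ^ 2 * 16 ^ n) ≠ 0 :=
      mul_ne_zero (mul_ne_zero (by norm_num) (pow_ne_zero _ hn1)) h16n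
    have hgoal : (Nat.centralBinom n : ℚ_[p]) ^ 2 / 16 ^ n
        - (Nat.centralBinom (n + 1) : ℚ_[p]) ^ 2 / 16 ^ (n + 1)
        = (4 * (n : ℚ_[p]) + 3) * (Nat.centralBinom n : ℚ_[p]) ^ 2 /
            (4 * ((n : ℚ_[p]) + 1) ^ 2 * 16 ^ n) := by
      rw [div_sub_div _ _ h16n h16n1, div_eq_div_iff (mul_ne_zero h16n h16n1) hD, pow_succ]
      linear_combination (-4 : ℚ_[p]) * 16 ^ n * 16 ^ n * key2
    rw [Finset.sum_range_succ, ih, ← hgoal]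
    ring

private lemma cb_mod (p : ℕ) [hp : Fact p.Prime] (r : ℕ) :
    ((Nat.centralBinom (p ^ r) : ℤ) : ZMod p) = 2 := by
  have hppos : 0 < p := hp.out.pos
  induction r with
  | zero =>
    have : Nat.centralBinom 1 = 2 := by decide
    simp [this]
  | succ r ih =>
    have h := Choose.choose_modEq_choose_mod_mul_choose_div
      (p := p) (n := 2 * p ^ (r + 1)) (k := p ^ (r + 1))
    have e1 : 2 * p ^ (r + 1) = p * (2 * p ^ r) := by ring
    have e2 : p ^ (r + 1) = p * p ^ r := by ring
    rw [e1, e2, Nat.mul_mod_right, Nat.mul_mod_right,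
      Nat.mul_div_cancel_left _ hppos, Nat.mul_div_cancel_left _ hppos] at h
    have h' := (ZMod.intCast_eq_intCast_iff _ _ _).mpr h
    rw [Nat.centralBinom_eq_two_mul_choose, e1, e2]
    rw [Nat.centralBinom_eq_two_mul_choose] at ih
    push_cast at h' ⊢
    rw [h']
    simp only [Nat.choose_self, Nat.cast_one, one_mul]
    exact_mod_cast ih

private lemma key_int (p : ℕ) [hp : Fact p.Prime] (hodd : Odd p) (r : ℕ) (hr : 1 ≤ r) :
    ((p : ℤ)) ^ (2 * r + 1) ∣
      (Nat.centralBinom (p ^ r - 1) : ℤ) ^ 2 - (p : ℤ) ^ (2 * r) * 16 ^ (p ^ r - 1) := by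
  have hppos : 0 < p := hp.out.pos
  have hN1 : 1 ≤ p ^ r := Nat.one_le_pow _ _ hppos
  set N := p ^ r with hN
  set C : ℤ := (Nat.centralBinom (N - 1) : ℤ) with hC
  set B : ℤ := (Nat.centralBinom N : ℤ) with hB
  have hsucc : (N : ℤ) * B = 2 * (2 * (N : ℤ) - 1) * C := by
    have h := Nat.succ_mul_centralBinom_succ (N - 1)
    rw [Nat.sub_add_cancel hN1] at h
    have h2 : ((N * Nat.centralBinom N : ℕ) : ℤ)
        = ((2 * (2 * (N - 1) + 1) * Nat.centralBinom (N - 1) : ℕ) : ℤ) := congrArg _ h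
    push_cast [hN1] at h2
    rw [hB, hC]
    linear_combination h2
  have hNZ : ((N : ℤ)) = (p : ℤ) ^ r := by rw [hN]; push_cast; ring
  have hpne2 : p ≠ 2 := by rintro rfl; exact (by decide : ¬ Odd 2) hodd
  have hp2 : (2 : ZMod p) ≠ 0 := by
    intro h
    have h2 : ((2 : ℕ) : ZMod p) = 0 := by exact_mod_cast h
    have hdvd := (ZMod.natCast_eq_zero_iff 2 p).mp h2
    exact hpne2 ((Nat.prime_dvd_prime_iff_eq hp.out Nat.prime_two).mp hdvd)
  have hNzmod : ((N : ℕ) : ZMod p) = 0 := by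
    rw [hN]
    push_cast
    rw [ZMod.natCast_self, zero_pow (by omega)]
  have h160 : (16 : ZMod p) ≠ 0 := by
    have : (16 : ZMod p) = 2 ^ 4 := by norm_num
    rw [this]; exact pow_ne_zero _ hp2
  have h16one : ((16 : ZMod p)) ^ (N - 1) = 1 := by
    have hdvd : (p - 1) ∣ (N - 1) := by
      have := Nat.sub_dvd_pow_sub_pow p 1 r
      simpa using this
    obtain ⟨m, hm⟩ := hdvd
    rw [hm, pow_mul']
    exact ZMod.pow_card_sub_one_eq_one (pow_ne_zero _ h160)
  have hmodp : (p : ℤ) ∣ B ^ 2 - 4 * (2 * (N : ℤ) - 1) ^ 2 * 16 ^ (N - 1) := by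
    apply (ZMod.intCast_zmod_eq_zero_iff_dvd _ p).mp
    push_cast
    have hBz : ((Nat.centralBinom N : ℕ) : ZMod p) = 2 := by
      rw [hN]; exact_mod_cast cb_mod p r
    rw [hB]
    push_cast
    rw [hBz, hNzmod, h16one]
    ring
  obtain ⟨d, hd⟩ := hmodp
  have hkey : 4 * (2 * (N : ℤ) - 1) ^ 2 *
      ((Nat.centralBinom (N - 1) : ℤ) ^ 2 - (p : ℤ) ^ (2 * r) * 16 ^ (N - 1))
      = (p : ℤ) ^ (2 * r + 1) * d := by
    have hsq : (N : ℤ) ^ 2 * B ^ 2 = 4 * (2 * (N : ℤ) - 1) ^ 2 * C ^ 2 := by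
      linear_combination ((N : ℤ) * B + 2 * (2 * (N : ℤ) - 1) * C) * hsucc
    have hN2 : (N : ℤ) ^ 2 = (p : ℤ) ^ (2 * r) := by rw [hNZ]; ring
    rw [← hC]
    calc 4 * (2 * (N : ℤ) - 1) ^ 2 * (C ^ 2 - (p : ℤ) ^ (2 * r) * 16 ^ (N - 1))
        = (p : ℤ) ^ (2 * r) * (B ^ 2 - 4 * (2 * (N : ℤ) - 1) ^ 2 * 16 ^ (N - 1)) := by
          linear_combination B ^ 2 * hN2 - hsq
      _ = (p : ℤ) ^ (2 * r + 1) * d := by rw [hd]; ring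
  have hprime : Prime (p : ℤ) := Nat.prime_iff_prime_int.mp hp.out
  have hndvd : ¬ (p : ℤ) ∣ 4 * (2 * (N : ℤ) - 1) ^ 2 := by
    intro hdvd
    have h0 : ((4 * (2 * (N : ℤ) - 1) ^ 2 : ℤ) : ZMod p) = 0 :=
      (ZMod.intCast_zmod_eq_zero_iff_dvd _ p).mpr hdvd
    push_cast at h0
    rw [hNzmod] at h0
    have h4 : (2 : ZMod p) * 2 = 0 := by linear_combination h0
    exact hp2 (mul_self_eq_zero.mp h4)
  have hcop : IsCoprime ((p : ℤ) ^ (2 * r + 1)) (4 * (2 * (N : ℤ) - 1) ^ 2) :=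
    ((hprime.coprime_iff_not_dvd).mpr hndvd).pow_left
  exact hcop.dvd_of_dvd_mul_right ⟨d, by linear_combination hkey⟩

theorem supercongruence_padic_quadratic_full (p : ℕ) [Fact p.Prime] (hp : Odd p)
    (r : ℕ) (hr : 1 ≤ r) :
    ∃ c : ℤ_[p],
      ∑ k ∈ Finset.range (p ^ r - 1),
          (4 * (k : ℚ_[p]) + 3) * (Nat.centralBinom k : ℚ_[p]) ^ 2 /
            (4 * ((k : ℚ_[p]) + 1) ^ 2 * 16 ^ k)
        = ((1 - (p : ℤ_[p]) ^ (2 * r) + (p : ℤ_[p]) ^ (2 * r + 1) * c : ℤ_[p]) : ℚ_[p]) := by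
  obtain ⟨d, hd⟩ := key_int p hp r hr
  set M := p ^ r - 1 with hM
  -- cast to ℤ_[p]
  have hZp : (Nat.centralBinom M : ℤ_[p]) ^ 2
      = (p : ℤ_[p]) ^ (2 * r) * 16 ^ M + (p : ℤ_[p]) ^ (2 * r + 1) * (d : ℤ_[p]) := by
    have h := congrArg (fun z : ℤ => (z : ℤ_[p])) hd
    push_cast at h
    linear_combination h
  -- 16 is a unit in ℤ_[p]
  have hpne2 : p ≠ 2 := by rintro rfl; exact (by decide : ¬ Odd 2) hp
  have h16u : IsUnit (16 : ℤ_[p]) := by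
    rw [PadicInt.isUnit_iff]
    have hle : ‖(16 : ℤ_[p])‖ ≤ 1 := PadicInt.norm_le_one _
    have hnlt : ¬ ‖(16 : ℤ_[p])‖ < 1 := by
      have h16c : ((16 : ℤ) : ℤ_[p]) = 16 := by push_cast; ring
      rw [← h16c, PadicInt.norm_int_lt_one_iff_dvd]
      intro hdvd
      have hprime : Prime (p : ℤ) := Nat.prime_iff_prime_int.mp Fact.out
      have h2 : (p : ℤ) ∣ 2 := hprime.dvd_of_dvd_pow (n := 4) (by norm_num at hdvd ⊢; exact hdvd)
      have : p ∣ 2 := by exact_mod_cast h2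
      exact hpne2 ((Nat.prime_dvd_prime_iff_eq Fact.out Nat.prime_two).mp this)
    linarith [lt_or_eq_of_le hle |>.resolve_left hnlt]
  obtain ⟨u, hu⟩ := h16u
  set w : ℤ_[p] := ((u⁻¹ : ℤ_[p]ˣ) : ℤ_[p]) with hwdef
  have hw : (16 : ℤ_[p]) * w = 1 := by rw [← hu, hwdef]; exact_mod_cast u.mul_inv
  refine ⟨-((d : ℤ_[p]) * w ^ M), ?_⟩
  rw [telesc p M]
  have h16q : (16 : ℚ_[p]) ≠ 0 := by norm_num
  have hwq : (16 : ℚ_[p]) * (w : ℚ_[p]) = 1 := by exact_mod_cast congrArg (fun z : ℤ_[p] => (z : ℚ_[p])) hw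
  have hZ2 : (Nat.centralBinom M : ℤ_[p]) ^ 2 * w ^ M
      = (p : ℤ_[p]) ^ (2 * r) + (p : ℤ_[p]) ^ (2 * r + 1) * ((d : ℤ_[p]) * w ^ M) := by
    have h1 : (16 : ℤ_[p]) ^ M * w ^ M = 1 := by rw [← mul_pow, hw, one_pow]
    calc (Nat.centralBinom M : ℤ_[p]) ^ 2 * w ^ M
        = (p : ℤ_[p]) ^ (2 * r) * (16 ^ M * w ^ M)
            + (p : ℤ_[p]) ^ (2 * r + 1) * ((d : ℤ_[p]) * w ^ M) := by
          rw [hZp]; ring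
      _ = _ := by rw [h1]; ring
  have hQ : (Nat.centralBinom M : ℚ_[p]) ^ 2 * (w : ℚ_[p]) ^ M
      = (p : ℚ_[p]) ^ (2 * r) + (p : ℚ_[p]) ^ (2 * r + 1) * ((d : ℚ_[p]) * (w : ℚ_[p]) ^ M) := by
    exact_mod_cast congrArg (fun z : ℤ_[p] => (z : ℚ_[p])) hZ2
  have h1q : (16 : ℚ_[p]) ^ M * (w : ℚ_[p]) ^ M = 1 := by rw [← mul_pow, hwq, one_pow]
  have e : (Nat.centralBinom M : ℚ_[p]) ^ 2 / 16 ^ M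
      = (p : ℚ_[p]) ^ (2 * r) + (p : ℚ_[p]) ^ (2 * r + 1) * ((d : ℚ_[p]) * (w : ℚ_[p]) ^ M) := by
    rw [div_eq_iff (pow_ne_zero _ h16q)]
    linear_combination (16 : ℚ_[p]) ^ M * hQ - (Nat.centralBinom M : ℚ_[p]) ^ 2 * h1q
  rw [e]
  push_cast
  ring
end

section
/- For every odd integer n > 1, the q-binomial coefficient qbinom(n, (n-1)/2) is divisible by [n] = 1+q+···+q^{n-1} in ℤ[q], and consequently qbinom(n+1, (n+1)/2) is also divisible by [n] in ℤ[q]. -/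
open RatFunc

/-- the natural inclusion `ℤ[q] → ℚ(q)` -/
noncomputable def ι (P : Polynomial ℤ) : RatFunc ℚ :=
  algebraMap (Polynomial ℚ) (RatFunc ℚ) (P.map (Int.castRingHom ℚ))

/-- `[n] = 1 + q + ⋯ + q^{n-1}` in `ℤ[q]` -/
noncomputable def qintPZ (n : ℕ) : Polynomial ℤ := ∑ i ∈ Finset.range n, Polynomial.X ^ i

/-! Write `n = 2m + 1`. The Gaussian polynomials satisfy the q-absorption identity
`[m+1] · [2m+1 choose m] = [2m+1] · [2m choose m]` in `ℤ[q]`, and `[2m+1]`, `[m+1]` are coprime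
there, even in the Bézout sense: `[a+b] = [b] + q^b [a]` lets Euclid's algorithm on the coprime
lengths `2m+1`, `m+1` run on the q-integers. Hence `[2m+1]` divides `[2m+1 choose m]`, and the
second claim follows from `[2m+2 choose m+1] = (1 + q^{m+1}) [2m+1 choose m]`. -/

open Polynomial Finset

section GeomSum

variable {R : Type*} [CommRing R] (x : R)

theorem geom_sum_add (a b : ℕ) :
    ∑ i ∈ range (a + b), x ^ i = ∑ i ∈ range a, x ^ i + x ^ a * ∑ i ∈ range b, x ^ i := by
  rw [sum_range_add, mul_sum]
  simp only [pow_add]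

theorem isCoprime_geom_sum_of_coprime {a b : ℕ} (h : Nat.Coprime a b) :
    IsCoprime (∑ i ∈ range a, x ^ i) (∑ i ∈ range b, x ^ i) := by
  induction hn : a + b using Nat.strong_induction_on generalizing a b with
  | _ n ih =>
    wlog hab : a ≤ b generalizing a b
    · exact (this h.symm (by omega) (le_of_not_ge hab)).symm
    obtain rfl | ha := Nat.eq_zero_or_pos a
    · simp [(Nat.coprime_zero_left b).mp h, isCoprime_zero_left]
    obtain ⟨c, rfl⟩ := Nat.exists_eq_add_of_le hab
    have hac : IsCoprime (∑ i ∈ range a, x ^ i) (∑ i ∈ range c, x ^ i) :=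
      ih (a + c) (by omega) (Nat.coprime_self_add_right.mp h) rfl
    rw [add_comm a c, geom_sum_add, mul_comm]
    exact hac.add_mul_left_right _

end GeomSum

noncomputable def qFactorial (m : ℕ) : ℤ[X] := ∏ j ∈ range m, (1 - Polynomial.X ^ (j + 1))

theorem qFactorial_succ (m : ℕ) :
    qFactorial (m + 1) = qFactorial m * (1 - Polynomial.X ^ (m + 1)) :=
  prod_range_succ _ _

/-- `gaussBinom k d` is the Gaussian polynomial `[k + d choose k]`; indexing by the two parts
avoids truncated subtraction. -/
noncomputable def gaussBinom : ℕ → ℕ → ℤ[X]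
  | 0, _ => 1
  | _ + 1, 0 => 1
  | k + 1, d + 1 => gaussBinom k (d + 1) + Polynomial.X ^ (k + 1) * gaussBinom (k + 1) d

theorem gaussBinom_mul_qFactorial_mul_qFactorial (k d : ℕ) :
    gaussBinom k d * qFactorial k * qFactorial d = qFactorial (k + d) := by
  induction k, d using gaussBinom.induct with
  | case1 d => simp [gaussBinom, qFactorial]
  | case2 k => simp [gaussBinom, qFactorial]
  | case3 k d ih₁ ih₂ =>
    rw [gaussBinom, show k + 1 + (d + 1) = k + d + 1 + 1 by omega, qFactorial_succ (k + d + 1),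
      qFactorial_succ k, qFactorial_succ d]
    rw [show k + (d + 1) = k + d + 1 by omega, qFactorial_succ d] at ih₁
    rw [show k + 1 + d = k + d + 1 by omega, qFactorial_succ k] at ih₂
    linear_combination (1 - Polynomial.X ^ (k + 1)) * ih₁
      + Polynomial.X ^ (k + 1) * (1 - Polynomial.X ^ (d + 1)) * ih₂

theorem one_sub_X_pow_ne_zero {R : Type*} [CommRing R] [Nontrivial R] {n : ℕ} (hn : n ≠ 0) :
    (1 : R[X]) - Polynomial.X ^ n ≠ 0 := by
  rw [← neg_sub, neg_ne_zero]
  simpa using X_pow_sub_C_ne_zero (Nat.pos_of_ne_zero hn) (1 : R)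

theorem qFactorial_ne_zero (m : ℕ) : qFactorial m ≠ 0 :=
  prod_ne_zero_iff.mpr fun j _ => one_sub_X_pow_ne_zero j.succ_ne_zero

theorem gaussBinom_comm (k d : ℕ) : gaussBinom k d = gaussBinom d k := by
  apply mul_right_cancel₀ (mul_ne_zero (qFactorial_ne_zero k) (qFactorial_ne_zero d))
  have hkd := gaussBinom_mul_qFactorial_mul_qFactorial k d
  have hdk := gaussBinom_mul_qFactorial_mul_qFactorial d k
  rw [add_comm d k] at hdk
  linear_combination hkd - hdk

theorem gaussBinom_succ_succ_self (m : ℕ) :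
    gaussBinom (m + 1) (m + 1) = (1 + Polynomial.X ^ (m + 1)) * gaussBinom m (m + 1) := by
  rw [gaussBinom, gaussBinom_comm (m + 1) m]
  ring

/-- The q-analogue of `(d + 1) * C(k + d + 1, k) = (k + d + 1) * C(k + d, k)`. -/
theorem qintPZ_mul_gaussBinom_succ (k d : ℕ) :
    qintPZ (d + 1) * gaussBinom k (d + 1) = qintPZ (k + d + 1) * gaussBinom k d := by
  have hne : (1 - Polynomial.X) * (qFactorial k * qFactorial d) ≠ 0 :=
    mul_ne_zero (by simpa using one_sub_X_pow_ne_zero one_ne_zero)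
      (mul_ne_zero (qFactorial_ne_zero k) (qFactorial_ne_zero d))
  apply mul_left_cancel₀ hne
  have hsucc := gaussBinom_mul_qFactorial_mul_qFactorial k (d + 1)
  have h := gaussBinom_mul_qFactorial_mul_qFactorial k d
  rw [qFactorial_succ d, ← add_assoc, qFactorial_succ (k + d)] at hsucc
  have e₁ := mul_neg_geom_sum (Polynomial.X : ℤ[X]) (d + 1)
  have e₂ := mul_neg_geom_sum (Polynomial.X : ℤ[X]) (k + d + 1)
  simp only [qintPZ]
  linear_combination (gaussBinom k (d + 1) * qFactorial k * qFactorial d) * e₁ + hsucc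
    - (1 - Polynomial.X ^ (k + d + 1)) * h - (gaussBinom k d * qFactorial k * qFactorial d) * e₂

theorem qintPZ_dvd_gaussBinom {k d : ℕ} (h : Nat.Coprime (k + d + 1) (d + 1)) :
    qintPZ (k + d + 1) ∣ gaussBinom k (d + 1) :=
  (isCoprime_geom_sum_of_coprime Polynomial.X h).dvd_of_dvd_mul_left
    ⟨gaussBinom k d, qintPZ_mul_gaussBinom_succ k d⟩

noncomputable def ιRingHom : ℤ[X] →+* RatFunc ℚ :=
  (algebraMap ℚ[X] (RatFunc ℚ)).comp (mapRingHom (Int.castRingHom ℚ))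

theorem ι_eq_ιRingHom : ι = ιRingHom := rfl

theorem ιRingHom_X : ιRingHom Polynomial.X = q := by
  simp [ιRingHom, q]

theorem ιRingHom_injective : Function.Injective ιRingHom :=
  (IsFractionRing.injective ℚ[X] (RatFunc ℚ)).comp (map_injective _ Int.cast_injective)

theorem ιRingHom_qFactorial (m : ℕ) : ιRingHom (qFactorial m) = qpoch q q m := by
  simp only [qFactorial, qpoch, map_prod, map_sub, map_one, map_pow, ιRingHom_X]
  simp only [pow_succ']

theorem qbinom_add_eq_ι_gaussBinom (k d : ℕ) : qbinom (k + d) k = ι (gaussBinom k d) := by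
  have hne (m : ℕ) : qpoch q q m ≠ 0 := by
    rw [← ιRingHom_qFactorial]
    exact (map_ne_zero_iff _ ιRingHom_injective).mpr (qFactorial_ne_zero m)
  rw [qbinom, Nat.add_sub_cancel_left, div_eq_iff (mul_ne_zero (hne k) (hne d)),
    ← ιRingHom_qFactorial, ← ιRingHom_qFactorial, ← ιRingHom_qFactorial,
    ← gaussBinom_mul_qFactorial_mul_qFactorial, ι_eq_ιRingHom]
  simp only [map_mul, mul_assoc]

theorem qbinom_divisible_general (n : ℕ) (hn : Odd n) :
    (∃ c : Polynomial ℤ, qbinom n ((n - 1) / 2) = ι (qintPZ n * c)) ∧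
    (∃ c : Polynomial ℤ, qbinom (n + 1) ((n + 1) / 2) = ι (qintPZ n * c)) := by
  obtain ⟨m, rfl⟩ := hn
  obtain ⟨c, hc⟩ : qintPZ (m + m + 1) ∣ gaussBinom m (m + 1) :=
    qintPZ_dvd_gaussBinom (Nat.coprime_add_self_left.mpr (Nat.coprime_self_add_right.mpr
      (Nat.coprime_one_right m)))
  rw [two_mul, show (m + m + 1 - 1) / 2 = m by omega, show (m + m + 1 + 1) / 2 = m + 1 by omega]
  refine ⟨⟨c, ?_⟩, ⟨(1 + Polynomial.X ^ (m + 1)) * c, ?_⟩⟩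
  · rw [← hc, ← qbinom_add_eq_ι_gaussBinom, add_assoc]
  · rw [show m + m + 1 + 1 = m + 1 + (m + 1) by omega, qbinom_add_eq_ι_gaussBinom,
      gaussBinom_succ_succ_self, hc, mul_left_comm]

/-- `[n]` divides both `qbinom(n,(n-1)/2)` and `qbinom(n+1,(n+1)/2)` in `ℤ[q]`:
the quotients are polynomials with integer coefficients. -/
theorem qbinom_divisible (n : ℕ) (hn : Odd n) (hn1 : 1 < n) :
    (∃ c : Polynomial ℤ, qbinom n ((n - 1) / 2) = ι (qintPZ n * c)) ∧
    (∃ c : Polynomial ℤ, qbinom (n + 1) ((n + 1) / 2) = ι (qintPZ n * c)) :=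
  qbinom_divisible_general n hn
end
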